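/- Let A ∈ GL(n, ℤ) and let φ : B_r → B_r be a Λ_A-equivariant symplectomorphism of B_r (a bijection of B_r onto itself, with φ and φ⁻¹ both C^∞ on B_r, φ symplectic and Λ_A-equivariant). Then φ(0) = 0, and the Fréchet derivative of φ at 0 (taken within B_r) is a linear rotation of the form z ↦ (θᵢ·z_{σ(i)})ᵢ for some permutation σ of {1, …, n} and unit complex numbers θ₁, …, θₙ. -/

import Mathlib

open scoped BigOperators

/-- The standard symplectic form on `ℂⁿ`: `ω₀(u, v) = ∑ₖ Im(conj(uₖ)·vₖ)`. -/
noncomputable def omega0 (n : ℕ) (u v : EuclideanSpace ℂ (Fin n)) : ℝ :=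
  ∑ k, ((starRingEnd ℂ) (u k) * v k).im

/-- The componentwise rotation action of the `n`-torus `Tⁿ = (S¹)ⁿ` on `ℂⁿ`. -/
def torusSMul (n : ℕ) (t : Fin n → Circle) (z : EuclideanSpace ℂ (Fin n)) :
    EuclideanSpace ℂ (Fin n) :=
  WithLp.toLp 2 (fun k => (t k : ℂ) * z k)

/-- For `A ∈ GL(n, ℤ)`, the induced torus automorphism `Λ_A(t)ᵢ = ∏ⱼ tⱼ^{Aᵢⱼ}`. -/
noncomputable def torusAut (n : ℕ) (A : GL (Fin n) ℤ) (t : Fin n → Circle) : Fin n → Circle :=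
  fun i => ∏ j, t j ^ ((A : Matrix (Fin n) (Fin n) ℤ) i j)

/-- `φ` is symplectic on the closed ball of radius `r`: it is `C^∞` there and its
Fréchet derivative (within the ball) preserves `ω₀` at every point. -/
noncomputable def IsSymplecticOn (n : ℕ) (r : ℝ)
    (φ : EuclideanSpace ℂ (Fin n) → EuclideanSpace ℂ (Fin n)) : Prop :=
  ContDiffOn ℝ (⊤ : ℕ∞) φ (Metric.closedBall 0 r) ∧
    ∀ z ∈ Metric.closedBall (0 : EuclideanSpace ℂ (Fin n)) r, ∀ u v,
      omega0 n (fderivWithin ℝ φ (Metric.closedBall 0 r) z u)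
        (fderivWithin ℝ φ (Metric.closedBall 0 r) z v) = omega0 n u v

/-- `φ` is `Λ_A`-equivariant on the closed ball of radius `r`. -/
def IsEquivariantOn (n : ℕ) (r : ℝ) (A : GL (Fin n) ℤ)
    (φ : EuclideanSpace ℂ (Fin n) → EuclideanSpace ℂ (Fin n)) : Prop :=
  ∀ t : Fin n → Circle, ∀ z ∈ Metric.closedBall (0 : EuclideanSpace ℂ (Fin n)) r,
    φ (torusSMul n t z) = torusSMul n (torusAut n A t) (φ z)


section Helpers
open Complex

lemma zpow_finset_sum' {G ι : Type*} [CommGroup G] (s : Finset ι) (aa : G) (f : ι → ℤ) :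
    aa ^ (∑ i ∈ s, f i) = ∏ i ∈ s, aa ^ f i := by
  classical
  induction s using Finset.induction_on with
  | empty => simp
  | insert _ _ h ih => rw [Finset.sum_insert h, Finset.prod_insert h, zpow_add, ih]

lemma torusAut_aut (n : ℕ) (A : GL (Fin n) ℤ) (s : Fin n → Circle) (i : Fin n) :
    torusAut n A (torusAut n A⁻¹ s) i = s i := by
  unfold torusAut
  have h1 : ∀ j, ((∏ k, s k ^ ((A⁻¹ : GL (Fin n) ℤ) : Matrix (Fin n) (Fin n) ℤ) j k) ^ ((A : Matrix (Fin n) (Fin n) ℤ) i j))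
      = ∏ k, s k ^ (((A : Matrix (Fin n) (Fin n) ℤ) i j) * ((A⁻¹ : GL (Fin n) ℤ) : Matrix (Fin n) (Fin n) ℤ) j k) := by
    intro j
    rw [← Finset.prod_zpow]
    exact Finset.prod_congr rfl fun k _ => by rw [← zpow_mul, mul_comm]
  simp_rw [h1]
  rw [Finset.prod_comm]
  have h2 : ∀ k, (∏ j, s k ^ (((A : Matrix (Fin n) (Fin n) ℤ) i j) * ((A⁻¹ : GL (Fin n) ℤ) : Matrix (Fin n) (Fin n) ℤ) j k))
      = s k ^ (∑ j, ((A : Matrix (Fin n) (Fin n) ℤ) i j) * ((A⁻¹ : GL (Fin n) ℤ) : Matrix (Fin n) (Fin n) ℤ) j k) := by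
    intro k; rw [zpow_finset_sum']
  simp_rw [h2]
  have h3 : ∀ k, (∑ j, ((A : Matrix (Fin n) (Fin n) ℤ) i j) * ((A⁻¹ : GL (Fin n) ℤ) : Matrix (Fin n) (Fin n) ℤ) j k)
      = ((A * A⁻¹ : GL (Fin n) ℤ) : Matrix (Fin n) (Fin n) ℤ) i k := by
    intro k
    rw [Units.val_mul, Matrix.mul_apply]
  simp_rw [h3, mul_inv_cancel]
  have h4 : ((1 : GL (Fin n) ℤ) : Matrix (Fin n) (Fin n) ℤ) = 1 := rfl
  rw [h4]
  have h5 : ∀ k, s k ^ ((1 : Matrix (Fin n) (Fin n) ℤ) i k) = if k = i then s i else 1 := by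
    intro k
    by_cases hk : k = i
    · subst hk; simp [Matrix.one_apply]
    · simp [Matrix.one_apply, Ne.symm hk, hk]
  simp_rw [h5]
  simp

noncomputable def torusCLM (n : ℕ) (t : Fin n → Circle) :
    EuclideanSpace ℂ (Fin n) →L[ℝ] EuclideanSpace ℂ (Fin n) :=
  LinearMap.toContinuousLinearMap
  { toFun := torusSMul n t
    map_add' := by
      intro x y; ext k
      simp [torusSMul]; ring
    map_smul' := by
      intro c x; ext k
      simp [torusSMul, Complex.real_smul]; ring }

lemma torusSMul_zero (n : ℕ) (t : Fin n → Circle) : torusSMul n t 0 = 0 := by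
  ext k; simp [torusSMul]

lemma torusSMul_norm (n : ℕ) (t : Fin n → Circle) (z : EuclideanSpace ℂ (Fin n)) :
    ‖torusSMul n t z‖ = ‖z‖ := by
  rw [EuclideanSpace.norm_eq, EuclideanSpace.norm_eq]
  congr 1
  refine Finset.sum_congr rfl fun k _ => ?_
  show ‖(t k : ℂ) * z k‖ ^ 2 = ‖z k‖ ^ 2
  rw [norm_mul]
  simp [Circle.norm_coe]

lemma deriv_equiv (n : ℕ) (r : ℝ) (hr : 0 < r) (A : GL (Fin n) ℤ)
    (φ : EuclideanSpace ℂ (Fin n) → EuclideanSpace ℂ (Fin n))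
    (hsm : ContDiffOn ℝ (⊤ : ℕ∞) φ (Metric.closedBall 0 r))
    (hequiv : ∀ t : Fin n → Circle, ∀ z ∈ Metric.closedBall (0 : EuclideanSpace ℂ (Fin n)) r,
      φ (torusSMul n t z) = torusSMul n (torusAut n A t) (φ z))
    (t : Fin n → Circle) :
    (fderivWithin ℝ φ (Metric.closedBall 0 r) 0).comp (torusCLM n t)
      = (torusCLM n (torusAut n A t)).comp (fderivWithin ℝ φ (Metric.closedBall 0 r) 0) := by
  set B := Metric.closedBall (0 : EuclideanSpace ℂ (Fin n)) r with hB
  have h0 : (0 : EuclideanSpace ℂ (Fin n)) ∈ B := Metric.mem_closedBall_self hr.le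
  have hU : UniqueDiffOn ℝ B :=
    uniqueDiffOn_convex (convex_closedBall _ _)
      (by rw [hB, interior_closedBall _ hr.ne']; exact Metric.nonempty_ball.mpr hr)
  have hd : HasFDerivWithinAt φ (fderivWithin ℝ φ B 0) B 0 :=
    ((hsm.differentiableOn (by simp)) 0 h0).hasFDerivWithinAt
  have hmaps : Set.MapsTo (torusSMul n t) B B := by
    intro z hz
    rw [hB, Metric.mem_closedBall, dist_zero_right] at hz ⊢
    rw [torusSMul_norm]; exact hz
  have hM : HasFDerivWithinAt (torusSMul n t) (torusCLM n t) B 0 :=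
    (torusCLM n t).hasFDerivAt.hasFDerivWithinAt
  have h1 : HasFDerivWithinAt (fun z => φ (torusSMul n t z))
      ((fderivWithin ℝ φ B 0).comp (torusCLM n t)) B 0 := by
    have hd' : HasFDerivWithinAt φ (fderivWithin ℝ φ B 0) B (torusSMul n t 0) := by
      rw [torusSMul_zero]; exact hd
    exact hd'.comp (0 : EuclideanSpace ℂ (Fin n)) hM hmaps
  have h2 : HasFDerivWithinAt (fun z => torusSMul n (torusAut n A t) (φ z))
      ((torusCLM n (torusAut n A t)).comp (fderivWithin ℝ φ B 0)) B 0 :=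
    ((torusCLM n (torusAut n A t)).hasFDerivAt.comp_hasFDerivWithinAt 0 hd)
  have h1' : HasFDerivWithinAt (fun z => torusSMul n (torusAut n A t) (φ z))
      ((fderivWithin ℝ φ B 0).comp (torusCLM n t)) B 0 :=
    h1.congr (fun z hz => (hequiv t z hz).symm) (by rw [← hequiv t 0 h0, torusSMul_zero])
  exact hU.eq h0 h1' h2


lemma circle_coe_pow (z : Circle) (m : ℕ) : ((z^m : Circle) : ℂ) = (z:ℂ)^m := by
  induction m with
  | zero => simp
  | succ k ih => rw [pow_succ, pow_succ, Circle.coe_mul, ih]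

lemma circle_coe_zpow (z : Circle) (m : ℤ) : ((z^m : Circle) : ℂ) = (z:ℂ)^m := by
  cases m <;> simp [zpow_natCast, zpow_negSucc, circle_coe_pow]

lemma circle_zpow_trivial {m : ℤ} (h : ∀ c : Circle, (c:ℂ)^m = 1) : m = 0 := by
  by_contra hm
  have hc := h (Circle.exp (Real.pi / m))
  rw [Circle.coe_exp, ← Complex.exp_int_mul] at hc
  have he : ((m:ℂ) * (↑(Real.pi / (m:ℝ)) * Complex.I)) = Real.pi * Complex.I := by
    have hm' : (m:ℂ) ≠ 0 := Int.cast_ne_zero.mpr hm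
    push_cast
    field_simp
  rw [he, Complex.exp_pi_mul_I] at hc
  norm_num at hc

lemma main_alg (n : ℕ) (A : GL (Fin n) ℤ)
    (L : EuclideanSpace ℂ (Fin n) →L[ℝ] EuclideanSpace ℂ (Fin n))
    (hLe : ∀ (t : Fin n → Circle) u (i : Fin n),
      L (torusSMul n t u) i = ((torusAut n A t i : ℂ)) * L u i)
    (hs : ∀ u v, omega0 n (L u) (L v) = omega0 n u v) :
    ∃ σ : Equiv.Perm (Fin n), ∃ θ : Fin n → Circle,
      ∀ u i, L u i = (θ i : ℂ) * u (σ i) := by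
  classical
  set M : Fin n → Fin n → ℤ := fun i j => (A : Matrix (Fin n) (Fin n) ℤ) i j with hM
  set sgl : Fin n → ℂ → EuclideanSpace ℂ (Fin n) := fun j w => EuclideanSpace.single j w with hsgl
  set a : Fin n → Fin n → ℂ := fun i j => L (sgl j 1) i with ha
  set b : Fin n → Fin n → ℂ := fun i j => L (sgl j I) i with hb
  set a' : Fin n → Fin n → ℂ := fun i j => (a i j - I * b i j) / 2 with ha'
  set b' : Fin n → Fin n → ℂ := fun i j => (a i j + I * b i j) / 2 with hb'
  -- torusAut of an update of the constant-one family
  have hupd_aut : ∀ (i j : Fin n) (c : Circle),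
      torusAut n A (Function.update (fun _ => (1 : Circle)) j c) i = c ^ M i j := by
    intro i j c
    unfold torusAut
    rw [Finset.prod_eq_single j]
    · rw [Function.update_self]
    · intro k _ hk
      rw [Function.update_of_ne hk]
      exact one_zpow _
    · intro h; exact absurd (Finset.mem_univ j) h
  have hsingle_smul : ∀ (j : Fin n) (c : Circle) (w : ℂ),
      torusSMul n (Function.update (fun _ => (1 : Circle)) j c) (sgl j w) = sgl j ((c:ℂ) * w) := by
    intro j c w
    ext k
    show (Function.update (fun _ => (1 : Circle)) j c k : ℂ) * (EuclideanSpace.single j w) k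
      = (EuclideanSpace.single j ((c:ℂ)*w)) k
    rw [EuclideanSpace.single_apply, EuclideanSpace.single_apply]
    by_cases hk : k = j
    · subst hk; simp
    · simp [hk]
  have hsingle_fix : ∀ (j j' : Fin n), j' ≠ j → ∀ (c : Circle) (w : ℂ),
      torusSMul n (Function.update (fun _ => (1 : Circle)) j c) (sgl j' w) = sgl j' w := by
    intro j j' hne c w
    ext k
    show (Function.update (fun _ => (1 : Circle)) j c k : ℂ) * (EuclideanSpace.single j' w) k
      = (EuclideanSpace.single j' w) k
    rw [EuclideanSpace.single_apply]
    by_cases hk : k = j'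
    · subst hk
      rw [Function.update_of_ne hne]
      simp
    · simp [hk]
  have F1 : ∀ (i j : Fin n) (w : ℂ) (c : Circle),
      L (sgl j ((c:ℂ) * w)) i = (c:ℂ) ^ (M i j) * L (sgl j w) i := by
    intro i j w c
    have := hLe (Function.update (fun _ => (1 : Circle)) j c) (sgl j w) i
    rw [hsingle_smul, hupd_aut, circle_coe_zpow] at this
    exact this
  have F2 : ∀ (i j j' : Fin n), j' ≠ j → ∀ (w : ℂ) (c : Circle),
      L (sgl j' w) i = (c:ℂ) ^ (M i j) * L (sgl j' w) i := by
    intro i j j' hne w c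
    have := hLe (Function.update (fun _ => (1 : Circle)) j c) (sgl j' w) i
    rw [hsingle_fix j j' hne, hupd_aut, circle_coe_zpow] at this
    exact this
  -- decomposition of single j z
  have hdecomp : ∀ (j : Fin n) (z : ℂ),
      sgl j z = z.re • sgl j 1 + z.im • sgl j I := by
    intro j z
    ext k
    show EuclideanSpace.single j z k
      = (z.re • EuclideanSpace.single j (1:ℂ) + z.im • EuclideanSpace.single j I) k
    rw [PiLp.add_apply, PiLp.smul_apply, PiLp.smul_apply,
      EuclideanSpace.single_apply, EuclideanSpace.single_apply, EuclideanSpace.single_apply]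
    by_cases hk : k = j
    · subst hk
      simp only [if_true, Complex.real_smul]
      rw [mul_one]
      exact (Complex.re_add_im z).symm
    · simp [hk]
  have lin : ∀ (i j : Fin n) (z : ℂ),
      L (sgl j z) i = z * a' i j + (starRingEnd ℂ) z * b' i j := by
    intro i j z
    have h1 : L (sgl j z) i = (z.re : ℂ) * a i j + (z.im : ℂ) * b i j := by
      rw [hdecomp, map_add, map_smul, map_smul]
      simp only [PiLp.add_apply, PiLp.smul_apply, Complex.real_smul]
      try rfl
    rw [h1, ha', hb']
    have hz := Complex.re_add_im z
    have hzc : (starRingEnd ℂ) z = (z.re : ℂ) - z.im * I := by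
      apply Complex.ext <;> simp
    rw [hzc]
    linear_combination ((a i j - I * b i j)/2) * hz + ((z.im : ℂ) * b i j) * Complex.I_sq
  have G1 : ∀ (i j : Fin n) (c : Circle),
      (c:ℂ) * a' i j = (c:ℂ) ^ (M i j) * a' i j := by
    intro i j c
    have E1 := F1 i j 1 c
    have E2 := F1 i j I c
    rw [mul_one] at E1
    simp only [lin] at E1 E2
    simp only [map_mul, map_one, Complex.conj_I, one_mul, mul_one] at E1 E2
    set cc := (starRingEnd ℂ) (c:ℂ) with hcc
    set K := (c:ℂ) ^ (M i j) with hK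
    linear_combination E1/2 - Complex.I/2 * E2
      - (((c:ℂ)*(a' i j) - cc*(b' i j) - K*(a' i j) + K*(b' i j))/2) * Complex.I_sq
      + ((c:ℂ)*(a i j)/2 - (c:ℂ)*I*(b i j)/2 - (a i j)*cc/2 + I*(b i j)*K - I*(b i j)*cc/2) * Complex.I_sq
  have G2 : ∀ (i j : Fin n) (c : Circle),
      (starRingEnd ℂ) (c:ℂ) * b' i j = (c:ℂ) ^ (M i j) * b' i j := by
    intro i j c
    have E1 := F1 i j 1 c
    have E2 := F1 i j I c
    rw [mul_one] at E1
    simp only [lin] at E1 E2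
    simp only [map_mul, map_one, Complex.conj_I, one_mul, mul_one] at E1 E2
    set cc := (starRingEnd ℂ) (c:ℂ) with hcc
    set K := (c:ℂ) ^ (M i j) with hK
    linear_combination E1/2 + Complex.I/2 * E2
      + (((c:ℂ)*(a' i j) - cc*(b' i j) - K*(a' i j) + K*(b' i j))/2) * Complex.I_sq
      + (cc*(a i j)/2 + cc*I*(b i j)/2 - (a i j)*(c:ℂ)/2 - I*(b i j)*K + I*(b i j)*(c:ℂ)/2) * Complex.I_sq
  -- consequences of the scaling relations
  have ha1 : ∀ i j, a' i j ≠ 0 → M i j = 1 := by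
    intro i j hne
    have h : ∀ c : Circle, (c:ℂ) ^ (M i j - 1) = 1 := by
      intro c
      have := G1 i j c
      have hcm : (c:ℂ) ^ (M i j) = (c:ℂ) := (mul_right_cancel₀ hne this).symm
      rw [zpow_sub₀ (Circle.coe_ne_zero c), hcm, zpow_one, div_self (Circle.coe_ne_zero c)]
    have := circle_zpow_trivial h
    omega
  have hb1 : ∀ i j, b' i j ≠ 0 → M i j = -1 := by
    intro i j hne
    have h : ∀ c : Circle, (c:ℂ) ^ (M i j + 1) = 1 := by
      intro c
      have := G2 i j c
      have hcm : (c:ℂ) ^ (M i j) = (starRingEnd ℂ) (c:ℂ) := (mul_right_cancel₀ hne this).symm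
      rw [zpow_add₀ (Circle.coe_ne_zero c), hcm, zpow_one]
      rw [← Circle.coe_inv_eq_conj, Circle.coe_inv]
      exact inv_mul_cancel₀ (Circle.coe_ne_zero c)
    have := circle_zpow_trivial h
    omega
  have hnz_exists : ∀ i j, (a' i j ≠ 0 ∨ b' i j ≠ 0) → ∃ w : ℂ, L (sgl j w) i ≠ 0 := by
    intro i j hne
    by_contra hcon
    push_neg at hcon
    have h1 := hcon 1
    have h2 := hcon I
    rw [lin] at h1 h2
    simp only [map_one, Complex.conj_I, one_mul] at h1 h2
    have hA : a' i j = 0 := by linear_combination h1/2 - Complex.I/2 * h2 - (a' i j - b' i j)/2 * Complex.I_sq - I * b i j * Complex.I_sq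
    have hB : b' i j = 0 := by linear_combination h1/2 + Complex.I/2 * h2 + (a' i j - b' i j)/2 * Complex.I_sq + I * b i j * Complex.I_sq
    rcases hne with h | h
    · exact h hA
    · exact h hB
  have hz0 : ∀ i j j', j' ≠ j → (a' i j' ≠ 0 ∨ b' i j' ≠ 0) → M i j = 0 := by
    intro i j j' hne hnz
    obtain ⟨w, hw⟩ := hnz_exists i j' hnz
    apply circle_zpow_trivial
    intro c
    have hF := F2 i j j' hne w c
    have h2 : (1:ℂ) * L (sgl j' w) i = ((c:ℂ) ^ M i j) * L (sgl j' w) i := by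
      rw [one_mul]; exact hF
    exact (mul_right_cancel₀ hw h2).symm
  have hrowuniq : ∀ i j₁ j₂, (a' i j₁ ≠ 0 ∨ b' i j₁ ≠ 0) → (a' i j₂ ≠ 0 ∨ b' i j₂ ≠ 0) → j₁ = j₂ := by
    intro i j₁ j₂ h1 h2
    by_contra hne
    have h0 : M i j₂ = 0 := hz0 i j₂ j₁ hne h1
    rcases h2 with h | h
    · have := ha1 i j₂ h; omega
    · have := hb1 i j₂ h; omega
  -- symplectic condition at coordinate k
  have h0symp : ∀ k : Fin n,
      ∑ i, ((starRingEnd ℂ) (L (sgl k 1) i) * (L (sgl k I) i)).im = 1 := by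
    intro k
    have hh := hs (sgl k 1) (sgl k I)
    unfold omega0 at hh
    have hrhs : ∑ j, ((starRingEnd ℂ) ((sgl k 1) j) * (sgl k I) j).im = 1 := by
      have hterm : ∀ j, ((starRingEnd ℂ) ((sgl k 1) j) * (sgl k I) j).im
          = if j = k then 1 else 0 := by
        intro j
        rw [hsgl]
        simp only [EuclideanSpace.single_apply]
        by_cases hj : j = k
        · simp [hj]
        · simp [hj]
      rw [Finset.sum_congr rfl (fun j _ => hterm j)]
      simp
    rw [hrhs] at hh
    exact hh
  have P2 : ∀ k : Fin n, ∃ i, a' i k ≠ 0 ∨ b' i k ≠ 0 := by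
    intro k
    by_contra hcon
    push_neg at hcon
    have hL1 : ∀ i, L (sgl k 1) i = 0 := by
      intro i
      rw [lin, (hcon i).1, (hcon i).2]
      ring
    have hzero : (1:ℝ) = 0 := by
      rw [← h0symp k]
      apply Finset.sum_eq_zero
      intro i _
      rw [hL1 i]
      simp
    norm_num at hzero
  choose τ hτ using P2
  have hinjτ : Function.Injective τ := by
    intro k1 k2 h
    exact hrowuniq (τ k1) k1 k2 (hτ k1) (by rw [h]; exact hτ k2)
  have hbijT := Finite.injective_iff_bijective.mp hinjτ
  set τe := Equiv.ofBijective τ hbijT with hτe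
  have hστ : ∀ i, τ (τe.symm i) = i := fun i => τe.apply_symm_apply i
  have hnzσ : ∀ i, a' i (τe.symm i) ≠ 0 ∨ b' i (τe.symm i) ≠ 0 := by
    intro i
    have := hτ (τe.symm i)
    rwa [hστ i] at this
  have hoff : ∀ i j, j ≠ τe.symm i → a' i j = 0 ∧ b' i j = 0 := by
    intro i j hne
    refine ⟨?_, ?_⟩ <;> by_contra hc
    · exact hne (hrowuniq i j (τe.symm i) (Or.inl hc) (hnzσ i))
    · exact hne (hrowuniq i j (τe.symm i) (Or.inr hc) (hnzσ i))
  have hkey : ∀ i : Fin n, b' i (τe.symm i) = 0 ∧ Complex.normSq (a' i (τe.symm i)) = 1 := by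
    intro i
    set k := τe.symm i with hk
    have hτk : τ k = i := hστ i
    have hsum := h0symp k
    have hterm : ∀ i', i' ≠ i → ((starRingEnd ℂ) (L (sgl k 1) i') * (L (sgl k I) i')).im = 0 := by
      intro i' hne'
      have hoffk : a' i' k = 0 ∧ b' i' k = 0 := by
        by_cases hσ : k = τe.symm i'
        · exfalso
          apply hne'
          have h2 := hστ i'
          rw [← hσ] at h2
          rw [hτk] at h2
          exact h2.symm
        · exact hoff i' k hσ
      have hz : L (sgl k 1) i' = 0 := by
        rw [lin, hoffk.1, hoffk.2]; ring
      rw [hz]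
      simp
    rw [Finset.sum_eq_single i (fun i' _ hne' => hterm i' hne')
      (fun h => absurd (Finset.mem_univ i) h)] at hsum
    rw [lin, lin] at hsum
    simp only [map_one, Complex.conj_I, one_mul] at hsum
    by_cases hB : b' i k = 0
    · refine ⟨hB, ?_⟩
      rw [hB] at hsum
      have hc : ((starRingEnd ℂ) (a' i k + 0) * (I * a' i k + -I * 0)).im
          = Complex.normSq (a' i k) := by
        simp [Complex.normSq_apply, Complex.mul_im, Complex.mul_re]
        try ring
      rw [hc] at hsum
      exact hsum
    · exfalso
      have hm := hb1 i k hB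
      have hA : a' i k = 0 := by
        by_contra hA
        have := ha1 i k hA
        omega
      rw [hA] at hsum
      have hc : ((starRingEnd ℂ) (0 + b' i k) * (I * 0 + -I * b' i k)).im
          = -Complex.normSq (b' i k) := by
        simp [Complex.normSq_apply, Complex.mul_im, Complex.mul_re]
        try ring
      rw [hc] at hsum
      nlinarith [Complex.normSq_nonneg (b' i k)]
  refine ⟨τe.symm, fun i => ⟨a' i (τe.symm i), ?_⟩, ?_⟩
  · show a' i (τe.symm i) ∈ Metric.sphere (0:ℂ) 1
    rw [mem_sphere_zero_iff_norm, Complex.norm_def, (hkey i).2]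
    exact Real.sqrt_one
  · intro u i
    have hu : u = ∑ j, sgl j (u j) := by
      ext k
      have hsa : (∑ j, sgl j (u j)) k = ∑ j, sgl j (u j) k :=
        by rw [WithLp.ofLp_sum, Finset.sum_apply]
      rw [hsa, hsgl]
      simp [EuclideanSpace.single_apply]
    have step1 : L u i = ∑ j, L (sgl j (u j)) i := by
      conv_lhs => rw [hu]
      rw [map_sum]
      rw [WithLp.ofLp_sum, Finset.sum_apply]
    rw [step1]
    rw [Finset.sum_eq_single (τe.symm i) (fun j _ hj => by
      rw [lin, (hoff i j hj).1, (hoff i j hj).2]; ring)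
      (fun h => absurd (Finset.mem_univ _) h)]
    rw [lin, (hkey i).1]
    ring

end Helpers

/-- A `Λ_A`-equivariant symplectomorphism `φ` of `B_r` fixes the origin, and its
Fréchet derivative at `0` (within `B_r`) is a linear rotation
`z ↦ (θᵢ·z_{σ(i)})ᵢ` for some permutation `σ` and unit complex numbers `θᵢ`. -/
theorem equivariant_symplectomorphism_deriv_at_zero (n : ℕ) (hn : 1 ≤ n) (r : ℝ)
    (hr : 0 < r) (A : GL (Fin n) ℤ)
    (φ ψ : EuclideanSpace ℂ (Fin n) → EuclideanSpace ℂ (Fin n))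
    (hbij : Set.BijOn φ (Metric.closedBall 0 r) (Metric.closedBall 0 r))
    (hinv : ∀ z ∈ Metric.closedBall (0 : EuclideanSpace ℂ (Fin n)) r,
      ψ (φ z) = z ∧ φ (ψ z) = z)
    (hψsmooth : ContDiffOn ℝ (⊤ : ℕ∞) ψ (Metric.closedBall 0 r))
    (hsymp : IsSymplecticOn n r φ) (hequiv : IsEquivariantOn n r A φ) :
    φ 0 = 0 ∧
      ∃ σ : Equiv.Perm (Fin n), ∃ θ : Fin n → Circle,
        ∀ u : EuclideanSpace ℂ (Fin n), ∀ i,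
          fderivWithin ℝ φ (Metric.closedBall 0 r) 0 u i = (θ i : ℂ) * u (σ i) := by
  classical
  set B := Metric.closedBall (0 : EuclideanSpace ℂ (Fin n)) r with hB
  have h0 : (0 : EuclideanSpace ℂ (Fin n)) ∈ B := Metric.mem_closedBall_self hr.le
  have hφ0 : φ 0 = 0 := by
    have hfix : ∀ s : Fin n → Circle, φ 0 = torusSMul n s (φ 0) := by
      intro s
      have h := hequiv (torusAut n A⁻¹ s) 0 h0
      rw [torusSMul_zero] at h
      refine h.trans ?_
      ext k
      show (torusAut n A (torusAut n A⁻¹ s) k : ℂ) * (φ 0) k = (s k : ℂ) * (φ 0) k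
      rw [torusAut_aut]
    have h := hfix (fun _ => Circle.exp Real.pi)
    ext k
    have hk := congrArg (fun v => v k) h
    show φ 0 k = 0
    have hk' : φ 0 k = (Circle.exp Real.pi : ℂ) * φ 0 k := hk
    rw [Circle.coe_exp, Complex.exp_pi_mul_I] at hk'
    linear_combination hk' / 2
  refine ⟨hφ0, ?_⟩
  apply main_alg n A (fderivWithin ℝ φ B 0)
  · intro t u i
    have hc := deriv_equiv n r hr A φ hsymp.1 hequiv t
    have h2 := ContinuousLinearMap.ext_iff.mp hc u
    have h3 : fderivWithin ℝ φ B 0 (torusSMul n t u)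
        = torusSMul n (torusAut n A t) (fderivWithin ℝ φ B 0 u) := h2
    have h4 := congrArg (fun v => v i) h3
    exact h4
  · intro u v
    exact hsymp.2 0 h0 u v
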